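/- arXiv:0901.2605 — 10 statements merged into one kernel-verified Lean document; each statement's English description precedes it below -/
import Mathlib

section
/- The constrained minimization problem: minimize J_r(u) = ||Tu - g||² + Σ_{i=1}^N min{|u_i|², r²} subject to Qu = 0, admits a minimizer u* ∈ ℝ^N. -/
open Finset

lemma lsq_exists {E F : Type*} [NormedAddCommGroup E] [InnerProductSpace ℝ E]
    [NormedAddCommGroup F] [InnerProductSpace ℝ F] [FiniteDimensional ℝ F]
    (L : E →ₗ[ℝ] F) (b : F) : ∃ u : E, ∀ v : E, ‖L u - b‖ ≤ ‖L v - b‖ := by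
  set W := LinearMap.range L with hW
  obtain ⟨u, hu⟩ := LinearMap.mem_range.mp (W.orthogonalProjectionOnto b).2
  refine ⟨u, fun v => ?_⟩
  have key : ‖b - (W.orthogonalProjectionOnto b : F)‖ ≤ ‖b - L v‖ := by
    rw [← Submodule.starProjection_apply, Submodule.starProjection_minimal]
    refine ciInf_le ⟨0, ?_⟩ (⟨L v, LinearMap.mem_range_self _ v⟩ : W)
    rintro x ⟨w, rfl⟩
    exact norm_nonneg _
  calc ‖L u - b‖ = ‖b - (W.orthogonalProjectionOnto b : F)‖ := by rw [norm_sub_rev, hu]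
    _ ≤ ‖b - L v‖ := key
    _ = ‖L v - b‖ := norm_sub_rev _ _

lemma quad_min (N M M' : ℕ)
    (T : EuclideanSpace ℝ (Fin N) →ₗ[ℝ] EuclideanSpace ℝ (Fin M))
    (Q : EuclideanSpace ℝ (Fin N) →ₗ[ℝ] EuclideanSpace ℝ (Fin M'))
    (g : EuclideanSpace ℝ (Fin M)) (S : Finset (Fin N)) :
    ∃ u : EuclideanSpace ℝ (Fin N), Q u = 0 ∧ ∀ v : EuclideanSpace ℝ (Fin N), Q v = 0 →
      ‖T u - g‖ ^ 2 + ∑ i ∈ Sᶜ, (u i) ^ 2 ≤ ‖T v - g‖ ^ 2 + ∑ i ∈ Sᶜ, (v i) ^ 2 := by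
  classical
  set E := EuclideanSpace ℝ (Fin N)
  set K := LinearMap.ker Q
  let D : E →ₗ[ℝ] E :=
    { toFun := fun u => WithLp.toLp 2 (fun i => if i ∈ S then 0 else u i : Fin N → ℝ)
      map_add' := fun x y => PiLp.ext fun i => by
        show (if i ∈ S then (0:ℝ) else (x+y) i) =
          (if i ∈ S then (0:ℝ) else x i) + (if i ∈ S then (0:ℝ) else y i)
        by_cases h : i ∈ S <;> simp [h] <;> rfl
      map_smul' := fun c x => PiLp.ext fun i => by
        show (if i ∈ S then (0:ℝ) else (c • x) i) = c • (if i ∈ S then (0:ℝ) else x i)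
        by_cases h : i ∈ S <;> simp [h] <;> rfl }
  let F2 := WithLp 2 (EuclideanSpace ℝ (Fin M) × E)
  let e := WithLp.linearEquiv 2 ℝ (EuclideanSpace ℝ (Fin M) × E)
  let L : K →ₗ[ℝ] F2 := e.symm.toLinearMap ∘ₗ ((T ∘ₗ K.subtype).prod (D ∘ₗ K.subtype))
  let b : F2 := e.symm (g, 0)
  have hD : ∀ w : E, ‖D w‖ ^ 2 = ∑ i ∈ Sᶜ, (w i) ^ 2 := by
    intro w
    rw [EuclideanSpace.norm_eq, Real.sq_sqrt (by positivity)]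
    rw [← Finset.sum_subset (Finset.subset_univ Sᶜ)
      (fun x _ hx => by
        simp only [Finset.mem_compl, not_not] at hx
        simp [D, hx])]
    refine Finset.sum_congr rfl fun i hi => ?_
    rw [Finset.mem_compl] at hi
    simp [D, hi, sq_abs]
  have hid : ∀ w : K, ‖L w - b‖ ^ 2 = ‖T (w : E) - g‖ ^ 2 + ∑ i ∈ Sᶜ, ((w : E) i) ^ 2 := by
    intro w
    have : L w - b = e.symm (T (w : E) - g, D (w : E)) := by
      show e.symm _ - e.symm _ = _
      rw [← map_sub]
      congr 1
      simp [Prod.ext_iff]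
    rw [this, ← hD (w : E)]
    have := WithLp.prod_norm_sq_eq_of_L2 (e.symm (T (w : E) - g, D (w : E)))
    exact this
  obtain ⟨u0, hu0⟩ := lsq_exists L b
  refine ⟨(u0 : E), u0.2, fun v hv => ?_⟩
  have h2 := hu0 ⟨v, hv⟩
  have := pow_le_pow_left₀ (norm_nonneg (L u0 - b)) h2 2
  rw [hid u0, hid ⟨v, hv⟩] at this
  exact this

theorem stmt0 (N M M' : ℕ) (r : ℝ) (hr : 0 < r)
    (T : EuclideanSpace ℝ (Fin N) →ₗ[ℝ] EuclideanSpace ℝ (Fin M))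
    (Q : EuclideanSpace ℝ (Fin N) →ₗ[ℝ] EuclideanSpace ℝ (Fin M'))
    (g : EuclideanSpace ℝ (Fin M)) :
    ∃ u : EuclideanSpace ℝ (Fin N), Q u = 0 ∧
      ∀ v : EuclideanSpace ℝ (Fin N), Q v = 0 →
        ‖T u - g‖ ^ 2 + ∑ i, min (|u i| ^ 2) (r ^ 2) ≤
          ‖T v - g‖ ^ 2 + ∑ i, min (|v i| ^ 2) (r ^ 2) := by
  classical
  have hmin := quad_min N M M' T Q g
  set P : Finset (Fin N) → EuclideanSpace ℝ (Fin N) := fun S => (hmin S).choose with hP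
  set f : Finset (Fin N) → ℝ :=
    fun S => ‖T (P S) - g‖ ^ 2 + ∑ i ∈ Sᶜ, (P S i) ^ 2 + S.card * r ^ 2 with hf
  obtain ⟨S₀, -, hS₀⟩ := Finset.exists_min_image (Finset.univ : Finset (Finset (Fin N))) f
    ⟨∅, Finset.mem_univ _⟩
  refine ⟨P S₀, (hmin S₀).choose_spec.1, fun v hv => ?_⟩
  -- upper bound for J at the candidate
  have h1 : ‖T (P S₀) - g‖ ^ 2 + ∑ i, min (|P S₀ i| ^ 2) (r ^ 2) ≤ f S₀ := by
    have hsplit : ∑ i, min (|P S₀ i| ^ 2) (r ^ 2)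
        = ∑ i ∈ S₀, min (|P S₀ i| ^ 2) (r ^ 2) + ∑ i ∈ S₀ᶜ, min (|P S₀ i| ^ 2) (r ^ 2) :=
      (Finset.sum_add_sum_compl S₀ _).symm
    have hA : ∑ i ∈ S₀, min (|P S₀ i| ^ 2) (r ^ 2) ≤ S₀.card * r ^ 2 := by
      calc ∑ i ∈ S₀, min (|P S₀ i| ^ 2) (r ^ 2) ≤ ∑ _i ∈ S₀, r ^ 2 :=
            Finset.sum_le_sum fun i _ => min_le_right _ _
        _ = S₀.card * r ^ 2 := by rw [Finset.sum_const, nsmul_eq_mul]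
    have hB : ∑ i ∈ S₀ᶜ, min (|P S₀ i| ^ 2) (r ^ 2) ≤ ∑ i ∈ S₀ᶜ, (P S₀ i) ^ 2 :=
      Finset.sum_le_sum fun i _ => (min_le_left _ _).trans_eq (sq_abs _)
    show ‖T (P S₀) - g‖ ^ 2 + ∑ i, min (|P S₀ i| ^ 2) (r ^ 2)
        ≤ ‖T (P S₀) - g‖ ^ 2 + ∑ i ∈ S₀ᶜ, (P S₀ i) ^ 2 + (S₀.card : ℝ) * r ^ 2
    rw [hsplit]
    linarith
  -- value of J at v equals f-style expression for S_v
  set Sv : Finset (Fin N) := Finset.univ.filter (fun i => r ≤ |v i|) with hSv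
  have h3 : ‖T v - g‖ ^ 2 + ∑ i ∈ Svᶜ, (v i) ^ 2 + Sv.card * r ^ 2
      = ‖T v - g‖ ^ 2 + ∑ i, min (|v i| ^ 2) (r ^ 2) := by
    have hsplit : ∑ i, min (|v i| ^ 2) (r ^ 2)
        = ∑ i ∈ Sv, min (|v i| ^ 2) (r ^ 2) + ∑ i ∈ Svᶜ, min (|v i| ^ 2) (r ^ 2) :=
      (Finset.sum_add_sum_compl Sv _).symm
    have hA : ∑ i ∈ Sv, min (|v i| ^ 2) (r ^ 2) = Sv.card * r ^ 2 := by
      rw [Finset.sum_congr rfl (fun i hi => ?_), Finset.sum_const, nsmul_eq_mul]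
      have : r ≤ |v i| := (Finset.mem_filter.mp hi).2
      exact min_eq_right (by nlinarith [abs_nonneg (v i)])
    have hB : ∑ i ∈ Svᶜ, min (|v i| ^ 2) (r ^ 2) = ∑ i ∈ Svᶜ, (v i) ^ 2 := by
      refine Finset.sum_congr rfl fun i hi => ?_
      have : ¬ r ≤ |v i| := by
        simpa [hSv] using (Finset.mem_compl.mp hi)
      rw [min_eq_left (by nlinarith [abs_nonneg (v i)]), sq_abs]
    rw [hsplit, hA, hB]; ring
  -- f Sv ≤ J v
  have h2 : f Sv ≤ ‖T v - g‖ ^ 2 + ∑ i, min (|v i| ^ 2) (r ^ 2) := by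
    rw [← h3]
    have key : ‖T (P Sv) - g‖ ^ 2 + ∑ x ∈ Svᶜ, (P Sv x) ^ 2
        ≤ ‖T v - g‖ ^ 2 + ∑ x ∈ Svᶜ, (v x) ^ 2 := (hmin Sv).choose_spec.2 v hv
    show ‖T (P Sv) - g‖ ^ 2 + ∑ i ∈ Svᶜ, (P Sv i) ^ 2 + (Sv.card : ℝ) * r ^ 2
        ≤ ‖T v - g‖ ^ 2 + ∑ i ∈ Svᶜ, (v i) ^ 2 + (Sv.card : ℝ) * r ^ 2
    linarith
  exact h1.trans ((hS₀ Sv (Finset.mem_univ _)).trans h2)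
end

section
/- For any real p ≥ 1, the constrained minimization problem: minimize J^p_r(u) = ||Tu - g||² + Σ_{i=1}^N min{|u_i|^p, r^p} subject to Qu = 0, admits a minimizer. -/
open Filter Finset

private lemma aux_min (N M : ℕ) (p : ℝ) (hp : 1 ≤ p)
    (T : EuclideanSpace ℝ (Fin N) →ₗ[ℝ] EuclideanSpace ℝ (Fin M))
    (g : EuclideanSpace ℝ (Fin M)) (W : Submodule ℝ (EuclideanSpace ℝ (Fin N)))
    (S : Finset (Fin N)) :
    ∃ u ∈ W, ∀ v ∈ W,
      ‖T u - g‖ ^ 2 + ∑ i ∈ S, |u i| ^ p ≤ ‖T v - g‖ ^ 2 + ∑ i ∈ S, |v i| ^ p := by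
  classical
  have hp0 : (0:ℝ) < p := lt_of_lt_of_le one_pos hp
  -- the coordinate projection onto S
  let P : EuclideanSpace ℝ (Fin N) →ₗ[ℝ] EuclideanSpace ℝ (Fin N) :=
    { toFun := fun u => WithLp.toLp 2 (fun i => if i ∈ S then u i else 0)
      map_add' := by
        intro u v; ext i; by_cases h : i ∈ S <;> simp [h, PiLp.add_apply]
      map_smul' := by
        intro c u; ext i; by_cases h : i ∈ S <;> simp [h, PiLp.smul_apply] }
  let L := T.prod P
  set G : EuclideanSpace ℝ (Fin M) × EuclideanSpace ℝ (Fin N) → ℝ :=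
    fun w => ‖w.1 - g‖ ^ 2 + ∑ i, |w.2 i| ^ p with hG
  have hGL : ∀ u, G (L u) = ‖T u - g‖ ^ 2 + ∑ i ∈ S, |u i| ^ p := by
    intro u
    have : ∑ i, |P u i| ^ p = ∑ i ∈ S, |u i| ^ p := by
      have : ∀ i, |P u i| ^ p = if i ∈ S then |u i| ^ p else 0 := by
        intro i
        by_cases h : i ∈ S <;>
          simp [P, h, Real.zero_rpow (ne_of_gt hp0)]
      simp only [this, Finset.sum_ite_mem, Finset.univ_inter]
    simp [hG, L, LinearMap.prod_apply, this]
  have habs : Continuous fun x : ℝ => |x| ^ p := by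
    have h1 : Continuous fun x : ℝ => x ^ p :=
      continuous_iff_continuousAt.2 fun x =>
        Real.continuousAt_rpow_const x p (Or.inr (le_of_lt hp0))
    exact h1.comp continuous_abs
  have hGcont : Continuous G := by
    refine (((continuous_fst.sub continuous_const).norm.pow 2)).add ?_
    exact continuous_finset_sum _ fun i _ =>
      habs.comp ((EuclideanSpace.proj i).continuous.comp continuous_snd)
  have hsum_nonneg : ∀ z : EuclideanSpace ℝ (Fin N), 0 ≤ ∑ i, |z i| ^ p :=
    fun z => Finset.sum_nonneg fun i _ => Real.rpow_nonneg (abs_nonneg _) p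
  -- coercivity
  have hcoer : Tendsto G (cocompact _) atTop := by
    rw [Filter.tendsto_atTop]
    intro C
    have hnorm := tendsto_norm_cocompact_atTop
      (E := EuclideanSpace ℝ (Fin M) × EuclideanSpace ℝ (Fin N))
    set R : ℝ := max (‖g‖ + max 1 C) ((N : ℝ) * max 1 C) with hRdef
    filter_upwards [hnorm.eventually_ge_atTop R] with w hw
    have hmax : R ≤ max ‖w.1‖ ‖w.2‖ := by rwa [Prod.norm_def] at hw
    have h1C : (1:ℝ) ≤ max 1 C := le_max_left _ _
    have hCC : C ≤ max 1 C := le_max_right _ _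
    rcases le_max_iff.mp hmax with h1 | h2
    · -- first component is large
      have hR1 : ‖g‖ + max 1 C ≤ ‖w.1‖ := le_trans (le_max_left _ _) h1
      have hn : max 1 C ≤ ‖w.1 - g‖ := by
        have h' := norm_sub_norm_le w.1 g
        linarith
      have hsq : C ≤ ‖w.1 - g‖ ^ 2 := by nlinarith [norm_nonneg (w.1 - g)]
      have hs2 := hsum_nonneg w.2
      show C ≤ ‖w.1 - g‖ ^ 2 + ∑ i, |w.2 i| ^ p
      linarith
    · -- second component is large
      have hRpos : (0:ℝ) < R := lt_of_lt_of_le (by positivity) (le_max_left _ _)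
      have hl1 : ‖w.2‖ ≤ ∑ i, |w.2 i| := by
        rw [EuclideanSpace.norm_eq]
        have hb : ∑ i, ‖w.2 i‖ ^ 2 ≤ (∑ i, |w.2 i|) ^ 2 := by
          simp only [Real.norm_eq_abs]
          exact Finset.sum_sq_le_sq_sum_of_nonneg fun i _ => abs_nonneg _
        calc Real.sqrt (∑ i, ‖w.2 i‖ ^ 2) ≤ Real.sqrt ((∑ i, |w.2 i|) ^ 2) :=
              Real.sqrt_le_sqrt hb
          _ = ∑ i, |w.2 i| := Real.sqrt_sq (Finset.sum_nonneg fun i _ => abs_nonneg _)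
      have hsumR : (N : ℝ) * max 1 C ≤ ∑ i, |w.2 i| :=
        le_trans (le_trans (le_max_right _ _) h2) hl1
      have hne : (Finset.univ : Finset (Fin N)).Nonempty := by
        by_contra hcon
        rw [Finset.not_nonempty_iff_eq_empty] at hcon
        have hz : ∑ i, |w.2 i| = 0 := by rw [hcon, Finset.sum_empty]
        have hle : ‖w.2‖ ≤ 0 := hl1.trans_eq hz
        linarith
      have hmsum : ∑ _i : Fin N, max 1 C ≤ ∑ i, |w.2 i| := by
        rw [Finset.sum_const, Finset.card_univ, Fintype.card_fin, nsmul_eq_mul]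
        exact hsumR
      obtain ⟨i, -, hi⟩ := Finset.exists_le_of_sum_le hne hmsum
      have h1i : (1:ℝ) ≤ |w.2 i| := le_trans h1C hi
      have hrp : |w.2 i| ≤ |w.2 i| ^ p := by
        calc |w.2 i| = |w.2 i| ^ (1:ℝ) := (Real.rpow_one _).symm
          _ ≤ |w.2 i| ^ p := Real.rpow_le_rpow_of_exponent_le h1i hp
      have hsingle : |w.2 i| ^ p ≤ ∑ j, |w.2 j| ^ p :=
        Finset.single_le_sum (fun j _ => Real.rpow_nonneg (abs_nonneg _) p)
          (Finset.mem_univ i)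
      have hpos1 : (0:ℝ) ≤ ‖w.1 - g‖ ^ 2 := by positivity
      show C ≤ ‖w.1 - g‖ ^ 2 + ∑ i, |w.2 i| ^ p
      linarith
  -- minimize over the image of W
  set V : Submodule ℝ (EuclideanSpace ℝ (Fin M) × EuclideanSpace ℝ (Fin N)) := W.map L
    with hV
  have hVclosed : IsClosed (V : Set (EuclideanSpace ℝ (Fin M) × EuclideanSpace ℝ (Fin N))) := V.closed_of_finiteDimensional
  have h0V : (0 : EuclideanSpace ℝ (Fin M) × EuclideanSpace ℝ (Fin N)) ∈ (V : Set _) :=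
    V.zero_mem
  have hev : ∀ᶠ w in cocompact _ ⊓ 𝓟 (V : Set _), G 0 ≤ G w :=
    Filter.Eventually.filter_mono inf_le_left
      (hcoer.eventually (Filter.eventually_ge_atTop (G 0)))
  obtain ⟨w0, hw0V, hmin⟩ :=
    hGcont.continuousOn.exists_isMinOn' hVclosed h0V hev
  obtain ⟨u0, hu0W, hLu0⟩ := hw0V
  refine ⟨u0, hu0W, fun v hv => ?_⟩
  have hLv : L v ∈ (V : Set _) := ⟨v, hv, rfl⟩
  have := hmin hLv
  rw [← hGL, ← hGL]
  simpa [hLu0] using this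

theorem stmt1 (N M M' : ℕ) (r p : ℝ) (hr : 0 < r) (hp : 1 ≤ p)
    (T : EuclideanSpace ℝ (Fin N) →ₗ[ℝ] EuclideanSpace ℝ (Fin M))
    (Q : EuclideanSpace ℝ (Fin N) →ₗ[ℝ] EuclideanSpace ℝ (Fin M'))
    (g : EuclideanSpace ℝ (Fin M)) :
    ∃ u : EuclideanSpace ℝ (Fin N), Q u = 0 ∧
      ∀ v : EuclideanSpace ℝ (Fin N), Q v = 0 →
        ‖T u - g‖ ^ 2 + ∑ i, min (|u i| ^ p) (r ^ p) ≤
          ‖T v - g‖ ^ 2 + ∑ i, min (|v i| ^ p) (r ^ p) := by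
  classical
  set W := LinearMap.ker Q with hW
  choose uu huuW huumin using fun S : Finset (Fin N) => aux_min N M p hp T g W S
  set φ : Finset (Fin N) → ℝ := fun S =>
    ‖T (uu S) - g‖ ^ 2 + ∑ i ∈ S, |uu S i| ^ p + (Sᶜ.card : ℝ) * r ^ p with hφ
  obtain ⟨S0, -, hS0⟩ := Finset.exists_min_image Finset.univ φ ⟨∅, Finset.mem_univ _⟩
  have key1 : ∀ (u : EuclideanSpace ℝ (Fin N)) (S : Finset (Fin N)),
      ∑ i, min (|u i| ^ p) (r ^ p) ≤ ∑ i ∈ S, |u i| ^ p + (Sᶜ.card : ℝ) * r ^ p := by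
    intro u S
    rw [← Finset.sum_add_sum_compl S fun i => min (|u i| ^ p) (r ^ p)]
    gcongr ?_ + ?_
    · exact Finset.sum_le_sum fun i _ => min_le_left _ _
    · calc ∑ i ∈ Sᶜ, min (|u i| ^ p) (r ^ p) ≤ ∑ _i ∈ Sᶜ, r ^ p :=
            Finset.sum_le_sum fun i _ => min_le_right _ _
        _ = (Sᶜ.card : ℝ) * r ^ p := by rw [Finset.sum_const, nsmul_eq_mul]
  refine ⟨uu S0, LinearMap.mem_ker.mp (huuW S0), fun v hv => ?_⟩
  have hvW : v ∈ W := LinearMap.mem_ker.mpr hv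
  set Sv : Finset (Fin N) := Finset.univ.filter fun i => |v i| ^ p ≤ r ^ p with hSv
  have key2 : ∑ i, min (|v i| ^ p) (r ^ p) = ∑ i ∈ Sv, |v i| ^ p + (Svᶜ.card : ℝ) * r ^ p := by
    rw [← Finset.sum_add_sum_compl Sv fun i => min (|v i| ^ p) (r ^ p)]
    congr 1
    · exact Finset.sum_congr rfl fun i hi =>
        min_eq_left (Finset.mem_filter.mp hi).2
    · rw [Finset.sum_congr rfl fun i hi => ?_, Finset.sum_const, nsmul_eq_mul]
      have := Finset.mem_compl.mp hi
      have h' : ¬ (|v i| ^ p ≤ r ^ p) := by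
        intro h; exact this (Finset.mem_filter.mpr ⟨Finset.mem_univ _, h⟩)
      exact min_eq_right (le_of_lt (not_le.mp h'))
  calc ‖T (uu S0) - g‖ ^ 2 + ∑ i, min (|uu S0 i| ^ p) (r ^ p)
      ≤ φ S0 := by
        simp only [hφ]
        rw [add_assoc]
        exact add_le_add_right (key1 (uu S0) S0) _
    _ ≤ φ Sv := hS0 Sv (Finset.mem_univ _)
    _ ≤ ‖T v - g‖ ^ 2 + ∑ i ∈ Sv, |v i| ^ p + (Svᶜ.card : ℝ) * r ^ p := by
        simp only [hφ]
        exact add_le_add_left (huumin Sv v hvW) _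
    _ = ‖T v - g‖ ^ 2 + ∑ i, min (|v i| ^ p) (r ^ p) := by
        rw [key2, add_assoc]
end

section
/- Let T : H → K be a bounded linear operator between Hilbert spaces with ‖T‖ < 1, and let F : H → [0,∞). Define F^{surr}(u,a) = F(u) - ‖Tu - Ta‖² + ‖u - a‖². If the sequence u^{n+1} ∈ argmin_u F^{surr}(u, u^n) is well defined and F(u⁰) < ∞, then both sequences F(u^n) and F^{surr}(u^{n+1}, u^n) are nonincreasing in n. -/
theorem stmt5 {H K : Type*} [NormedAddCommGroup H] [InnerProductSpace ℝ H]
    [NormedAddCommGroup K] [InnerProductSpace ℝ K]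
    (T : H →L[ℝ] K) (hT : ‖T‖ < 1)
    (F : H → ℝ) (hF : ∀ u, 0 ≤ F u)
    (Fsurr : H → H → ℝ)
    (hFsurr : ∀ u a, Fsurr u a = F u - ‖T u - T a‖ ^ 2 + ‖u - a‖ ^ 2)
    (u : ℕ → H)
    (hmin : ∀ n, ∀ w, Fsurr (u (n + 1)) (u n) ≤ Fsurr w (u n)) :
    (∀ n, F (u (n + 1)) ≤ F (u n)) ∧
      (∀ n, Fsurr (u (n + 2)) (u (n + 1)) ≤ Fsurr (u (n + 1)) (u n)) := by
  have hle : ∀ v a : H, F v ≤ Fsurr v a := by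
    intro v a
    have h1 : ‖T v - T a‖ ≤ ‖v - a‖ := by
      have := T.le_opNorm (v - a)
      rw [map_sub] at this
      calc ‖T v - T a‖ ≤ ‖T‖ * ‖v - a‖ := this
        _ ≤ 1 * ‖v - a‖ := by
            exact mul_le_mul_of_nonneg_right hT.le (norm_nonneg _)
        _ = ‖v - a‖ := one_mul _
    have h2 : ‖T v - T a‖ ^ 2 ≤ ‖v - a‖ ^ 2 :=
      pow_le_pow_left₀ (norm_nonneg _) h1 2
    rw [hFsurr]
    linarith
  have hdiag : ∀ a : H, Fsurr a a = F a := by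
    intro a; rw [hFsurr]; simp
  have hdec : ∀ n, F (u (n + 1)) ≤ F (u n) := by
    intro n
    calc F (u (n + 1)) ≤ Fsurr (u (n + 1)) (u n) := hle _ _
      _ ≤ Fsurr (u n) (u n) := hmin n _
      _ = F (u n) := hdiag _
  refine ⟨hdec, fun n => ?_⟩
  calc Fsurr (u (n + 2)) (u (n + 1)) ≤ Fsurr (u (n + 1)) (u (n + 1)) := hmin (n+1) _
    _ = F (u (n + 1)) := hdiag _
    _ ≤ Fsurr (u (n + 1)) (u n) := hle _ _
end

section
/- Under the assumptions of the surrogate iteration (‖T‖ < 1, F ≥ 0, u^{n+1} ∈ argmin_u F^{surr}(u, u^n), F(u⁰) < ∞), the consecutive differences satisfy ‖u^{n+1} - u^n‖ → 0 as n → ∞; in fact (1 - ‖T‖²)‖u^{n+1} - u^n‖² ≤ F(u^n) - F(u^{n+1}). -/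
theorem stmt6 {H K : Type*} [NormedAddCommGroup H] [InnerProductSpace ℝ H]
    [NormedAddCommGroup K] [InnerProductSpace ℝ K]
    (T : H →L[ℝ] K) (hT : ‖T‖ < 1)
    (F : H → ℝ) (hF : ∀ u, 0 ≤ F u)
    (Fsurr : H → H → ℝ)
    (hFsurr : ∀ u a, Fsurr u a = F u - ‖T u - T a‖ ^ 2 + ‖u - a‖ ^ 2)
    (u : ℕ → H)
    (hmin : ∀ n, ∀ w, Fsurr (u (n + 1)) (u n) ≤ Fsurr w (u n)) :
    (∀ n, (1 - ‖T‖ ^ 2) * ‖u (n + 1) - u n‖ ^ 2 ≤ F (u n) - F (u (n + 1))) ∧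
      Filter.Tendsto (fun n => ‖u (n + 1) - u n‖) Filter.atTop (nhds 0) := by
  have hTnn : (0:ℝ) ≤ ‖T‖ := norm_nonneg _
  have hc : (0:ℝ) < 1 - ‖T‖ ^ 2 := by nlinarith
  have key : ∀ n, (1 - ‖T‖ ^ 2) * ‖u (n + 1) - u n‖ ^ 2 ≤ F (u n) - F (u (n + 1)) := by
    intro n
    have h1 := hmin n (u n)
    rw [hFsurr, hFsurr] at h1
    simp only [sub_self, norm_zero] at h1
    have h2 : ‖T (u (n + 1)) - T (u n)‖ ^ 2 ≤ ‖T‖ ^ 2 * ‖u (n + 1) - u n‖ ^ 2 := by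
      have := T.le_opNorm (u (n + 1) - u n)
      rw [map_sub] at this
      nlinarith [norm_nonneg (T (u (n + 1)) - T (u n))]
    nlinarith
  refine ⟨key, ?_⟩
  have hanti : Antitone (fun n => F (u n)) := by
    apply antitone_nat_of_succ_le
    intro n
    have := key n
    nlinarith [sq_nonneg ‖u (n + 1) - u n‖]
  have hbdd : BddBelow (Set.range fun n => F (u n)) :=
    ⟨0, by rintro x ⟨n, rfl⟩; exact hF _⟩
  have hlim := tendsto_atTop_ciInf hanti hbdd
  have hdiff : Filter.Tendsto (fun n => F (u n) - F (u (n + 1))) Filter.atTop (nhds 0) := by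
    have := hlim.sub (hlim.comp (Filter.tendsto_add_atTop_nat 1))
    simpa using this
  have hsq : Filter.Tendsto (fun n => ‖u (n + 1) - u n‖ ^ 2) Filter.atTop (nhds 0) := by
    have h0 : Filter.Tendsto (fun _ : ℕ => (0:ℝ)) Filter.atTop (nhds 0) := tendsto_const_nhds
    have hsq' : Filter.Tendsto (fun n => (1 - ‖T‖ ^ 2) * ‖u (n + 1) - u n‖ ^ 2)
        Filter.atTop (nhds 0) := by
      apply tendsto_of_tendsto_of_tendsto_of_le_of_le h0 hdiff
      · intro n; positivity
      · exact key
    have := hsq'.const_mul (1 - ‖T‖ ^ 2)⁻¹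
    have heq : ∀ n : ℕ, (1 - ‖T‖ ^ 2)⁻¹ * ((1 - ‖T‖ ^ 2) * ‖u (n + 1) - u n‖ ^ 2)
        = ‖u (n + 1) - u n‖ ^ 2 := by
      intro n; field_simp
    simpa [heq] using this
  have hcomp := (Real.continuous_sqrt.continuousAt (x := (0:ℝ))).tendsto.comp hsq
  rw [Real.sqrt_zero] at hcomp
  have heq : ((fun x => Real.sqrt x) ∘ fun n => ‖u (n + 1) - u n‖ ^ 2)
      = fun n => ‖u (n + 1) - u n‖ := by
    funext n; exact Real.sqrt_sq (norm_nonneg _)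
  rwa [heq] at hcomp
end

section
/- For p > 1, r > 0, the function S_p(λ) = (F_p^{-1}(λ) - λ)² + |F_p^{-1}(λ)|^p is strictly increasing on [0,∞), satisfies S_p(r) < r^p and S_p(r + (p/2)r^{p-1}) = r^p + (p²/4)r^{2p-2} > r^p; hence there exists a unique λ'(r,p) ∈ (r, r + (p/2)r^{p-1}) with S_p(λ') = r^p. -/
theorem stmt9 (p r : ℝ) (hp : 1 < p) (hr : 0 < r)
    (F : ℝ → ℝ) (hF : F = fun t => t + (p / 2) * Real.sign t * |t| ^ (p - 1))
    (S : ℝ → ℝ)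
    (hS : S = fun l => (Function.invFun F l - l) ^ 2 + |Function.invFun F l| ^ p) :
    StrictMonoOn S (Set.Ici 0) ∧ S r < r ^ p ∧
      S (r + (p / 2) * r ^ (p - 1)) = r ^ p + (p ^ 2 / 4) * r ^ (2 * p - 2) ∧
      r ^ p < r ^ p + (p ^ 2 / 4) * r ^ (2 * p - 2) ∧
      ∃! l : ℝ, l ∈ Set.Ioo r (r + (p / 2) * r ^ (p - 1)) ∧ S l = r ^ p := by
  have hp0 : (0:ℝ) < p := by linarith
  have hp1 : (0:ℝ) < p - 1 := by linarith
  -- F on nonnegative reals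
  have hFnn : ∀ t : ℝ, 0 ≤ t → F t = t + (p/2) * t ^ (p-1) := by
    intro t ht
    rw [hF]
    rcases ht.lt_or_eq with h | h
    · simp only
      rw [Real.sign_of_pos h, abs_of_pos h, mul_one]
    · simp [← h, Real.sign_zero, Real.zero_rpow hp1.ne']
  -- monotone perturbation
  have hmonoψ : Monotone (fun t : ℝ => (p/2) * Real.sign t * |t| ^ (p-1)) := by
    have habs : ∀ t : ℝ, (0:ℝ) ≤ |t| ^ (p-1) := fun t => Real.rpow_nonneg (abs_nonneg t) _
    have hposv : ∀ t : ℝ, 0 < t → (p/2) * Real.sign t * |t| ^ (p-1) = (p/2) * t ^ (p-1) := by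
      intro t ht; rw [Real.sign_of_pos ht, abs_of_pos ht, mul_one]
    have hnegv : ∀ t : ℝ, t < 0 → (p/2) * Real.sign t * |t| ^ (p-1) = -((p/2) * (-t) ^ (p-1)) := by
      intro t ht; rw [Real.sign_of_neg ht, abs_of_neg ht]; ring
    have hnn : ∀ t : ℝ, 0 ≤ (p/2) * Real.sign t * |t| ^ (p-1) ∨ (p/2) * Real.sign t * |t| ^ (p-1) ≤ 0 ∧ t ≤ 0 := by
      intro t
      rcases lt_trichotomy t 0 with h | h | h
      · right
        constructor
        · rw [hnegv t h]
          have := Real.rpow_nonneg (by linarith : (0:ℝ) ≤ -t) (p-1)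
          nlinarith
        · linarith
      · left; simp [h]
      · left; rw [hposv t h]; positivity
    intro a b hab
    simp only
    rcases lt_trichotomy b 0 with hb | hb | hb
    · have ha : a < 0 := lt_of_le_of_lt hab hb
      rw [hnegv a ha, hnegv b hb]
      have := Real.rpow_le_rpow (by linarith : (0:ℝ) ≤ -b) (by linarith : -b ≤ -a) hp1.le
      nlinarith
    · rw [hb]
      simp only [Real.sign_zero, mul_zero, zero_mul]
      have ha0 : a ≤ 0 := by linarith
      rcases ha0.lt_or_eq with ha | ha
      · rw [hnegv a ha]
        have := Real.rpow_nonneg (by linarith : (0:ℝ) ≤ -a) (p-1)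
        nlinarith
      · rw [ha]; simp [Real.sign_zero]
    · rcases (hnn a) with h | h
      · rcases lt_trichotomy a 0 with ha | ha | ha
        · rw [hnegv a ha] at h
          have := Real.rpow_pos_of_pos (by linarith : (0:ℝ) < -a) (p-1)
          nlinarith
        · rw [ha]
          simp only [Real.sign_zero, mul_zero, zero_mul]
          rw [hposv b hb]; positivity
        · rw [hposv a ha, hposv b hb]
          have := Real.rpow_le_rpow ha.le hab hp1.le
          nlinarith
      · rw [hposv b hb]
        have : (0:ℝ) ≤ (p/2) * b ^ (p-1) := by positivity
        linarith [h.1]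
  have hmF : StrictMono F := by
    rw [hF]
    exact StrictMono.add_monotone strictMono_id hmonoψ
  have hinj := hmF.injective
  have hleft : ∀ t, Function.invFun F (F t) = t := fun t => Function.leftInverse_invFun hinj t
  -- the substituted function g
  set g : ℝ → ℝ := fun t => (p^2/4) * t ^ (2*p-2) + t ^ p with hg
  have hsq : ∀ t : ℝ, 0 ≤ t → t ^ (2*p-2) = (t ^ (p-1))^(2:ℕ) := by
    intro t ht
    rw [← Real.rpow_natCast (t ^ (p-1)) 2, ← Real.rpow_mul ht]
    norm_num
    ring_nf
  have hSF : ∀ t : ℝ, 0 ≤ t → S (F t) = g t := by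
    intro t ht
    rw [hS]
    simp only [hleft]
    rw [hFnn t ht, abs_of_nonneg ht, hg]
    simp only
    rw [hsq t ht]
    ring
  -- surjectivity onto nonnegatives
  have hsurj : ∀ l : ℝ, 0 ≤ l → ∃ t, 0 ≤ t ∧ F t = l := by
    intro l hl
    have hc : ContinuousOn (fun t : ℝ => t + (p/2) * t ^ (p-1)) (Set.Icc 0 l) := by
      apply Continuous.continuousOn
      exact continuous_id.add (continuous_const.mul
        (continuous_id.rpow_const fun x => Or.inr hp1.le))
    have h0 : (0:ℝ) + (p/2) * (0:ℝ) ^ (p-1) = 0 := by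
      rw [Real.zero_rpow hp1.ne']; ring
    have hle : l ≤ l + (p/2) * l ^ (p-1) := by
      nlinarith [Real.rpow_nonneg hl (p-1)]
    have hmem : l ∈ Set.Icc ((fun t : ℝ => t + (p/2) * t ^ (p-1)) 0)
        ((fun t : ℝ => t + (p/2) * t ^ (p-1)) l) := by
      simp only
      rw [h0]
      exact ⟨hl, hle⟩
    obtain ⟨t, htmem, hFt⟩ := intermediate_value_Icc hl hc hmem
    exact ⟨t, htmem.1, by rw [hFnn t htmem.1]; exact hFt⟩
  have hinv : ∀ l : ℝ, 0 ≤ l → 0 ≤ Function.invFun F l ∧ F (Function.invFun F l) = l := by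
    intro l hl
    obtain ⟨t, ht0, hFt⟩ := hsurj l hl
    rw [← hFt, hleft]
    exact ⟨ht0, rfl⟩
  -- g strictly monotone on nonnegatives
  have hgmono : StrictMonoOn g (Set.Ici 0) := by
    intro a ha b hb hab
    simp only [Set.mem_Ici] at ha hb
    have h1 : a ^ (2*p-2) ≤ b ^ (2*p-2) := Real.rpow_le_rpow ha hab.le (by linarith)
    have h2 : a ^ p < b ^ p := Real.rpow_lt_rpow ha hab hp0
    have hc : (0:ℝ) ≤ p^2/4 := by positivity
    simp only [hg]
    nlinarith
  -- S strictly monotone on nonnegatives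
  have hSmono : StrictMonoOn S (Set.Ici 0) := by
    intro a ha b hb hab
    simp only [Set.mem_Ici] at ha hb
    obtain ⟨hta, hFa⟩ := hinv a ha
    obtain ⟨htb, hFb⟩ := hinv b hb
    have hlt : Function.invFun F a < Function.invFun F b := by
      have : F (Function.invFun F a) < F (Function.invFun F b) := by rw [hFa, hFb]; exact hab
      exact hmF.lt_iff_lt.mp this
    have e1 : S a = g (Function.invFun F a) := by
      have := hSF _ hta; rwa [hFa] at this
    have e2 : S b = g (Function.invFun F b) := by
      have := hSF _ htb; rwa [hFb] at this
    rw [e1, e2]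
    exact hgmono hta htb hlt
  -- S r < r ^ p
  obtain ⟨htr0, hFtr⟩ := hinv r hr.le
  set tr := Function.invFun F r with htr_def
  have hF0 : F 0 = 0 := by rw [hFnn 0 le_rfl, Real.zero_rpow hp1.ne']; ring
  have htrpos : 0 < tr := by
    rcases htr0.lt_or_eq with h | h
    · exact h
    · exfalso; rw [← h, hF0] at hFtr; linarith
  have hreq : r = tr + (p/2) * tr ^ (p-1) := by rw [← hFtr, hFnn tr htr0]
  have hSr : S r < r ^ p := by
    have e1 : S r = g tr := by
      have := hSF tr htr0; rwa [hFtr] at this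
    -- Bernoulli
    have hs0 : (0:ℝ) ≤ (p/2) * tr ^ (p-2) := by positivity
    have hts : tr * (1 + (p/2) * tr ^ (p-2)) = r := by
      have : tr * tr ^ (p-2) = tr ^ (p-1) := by
        rw [show p - 1 = 1 + (p-2) by ring, Real.rpow_add htrpos, Real.rpow_one]
      rw [hreq]; nlinarith [this]
    have hbern : 1 + p * ((p/2) * tr ^ (p-2)) ≤ (1 + (p/2) * tr ^ (p-2)) ^ p :=
      one_add_mul_self_le_rpow_one_add (by linarith) hp.le
    have hrp : r ^ p = tr ^ p * (1 + (p/2) * tr ^ (p-2)) ^ p := by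
      rw [← hts, Real.mul_rpow htr0 (by linarith)]
    have hkey : tr ^ p * tr ^ (p-2) = tr ^ (2*p-2) := by
      rw [← Real.rpow_add htrpos]; ring_nf
    have htp : (0:ℝ) < tr ^ p := Real.rpow_pos_of_pos htrpos p
    have h2p2 : (0:ℝ) < tr ^ (2*p-2) := Real.rpow_pos_of_pos htrpos _
    have : tr ^ p + (p^2/2) * tr ^ (2*p-2) ≤ r ^ p := by
      rw [hrp]
      calc tr ^ p + (p^2/2) * tr ^ (2*p-2)
          = tr ^ p * (1 + p * ((p/2) * tr ^ (p-2))) := by rw [← hkey]; ring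
        _ ≤ tr ^ p * (1 + (p/2) * tr ^ (p-2)) ^ p := by
            exact mul_le_mul_of_nonneg_left hbern htp.le
    rw [e1, hg]
    simp only
    have hx : (0:ℝ) < p^2/4 * tr ^ (2*p-2) := mul_pos (by positivity) h2p2
    linarith
  -- S (F r) = r^p + (p^2/4) r^(2p-2)
  have hSFr : S (r + (p/2) * r ^ (p-1)) = r ^ p + (p^2/4) * r ^ (2*p-2) := by
    have := hSF r hr.le
    rw [hFnn r hr.le] at this
    rw [this, hg]
    simp only
    ring
  have hpos2 : r ^ p < r ^ p + (p^2/4) * r ^ (2*p-2) := by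
    have hx : (0:ℝ) < p^2/4 * r ^ (2*p-2) :=
      mul_pos (by positivity) (Real.rpow_pos_of_pos hr (2*p-2))
    linarith
  refine ⟨hSmono, hSr, hSFr, hpos2, ?_⟩
  -- existence and uniqueness
  have htr_lt_r : tr < r := by
    have : F tr < F r := by
      rw [hFtr, hFnn r hr.le]
      nlinarith [Real.rpow_pos_of_pos hr (p-1)]
    exact hmF.lt_iff_lt.mp this
  have hgc : ContinuousOn g (Set.Icc tr r) := by
    apply Continuous.continuousOn
    exact (continuous_const.mul
      (continuous_id.rpow_const fun x => Or.inr (by linarith))).add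
      (continuous_id.rpow_const fun x => Or.inr hp0.le)
  have hgtr : g tr = S r := by
    have := hSF tr htr0; rw [hFtr] at this; exact this.symm
  have hgr : g r = r ^ p + (p^2/4) * r ^ (2*p-2) := by rw [hg]; simp only; ring
  have hmem : r ^ p ∈ Set.Icc (g tr) (g r) := by
    constructor
    · rw [hgtr]; exact hSr.le
    · rw [hgr]; exact hpos2.le
  obtain ⟨t, htIcc, hgt⟩ := intermediate_value_Icc htr_lt_r.le hgc hmem
  have ht1 : tr < t := by
    rcases htIcc.1.lt_or_eq with h | h
    · exact h
    · exfalso; rw [← h, hgtr] at hgt; linarith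
  have ht2 : t < r := by
    rcases htIcc.2.lt_or_eq with h | h
    · exact h
    · exfalso; rw [h, hgr] at hgt; linarith
  have ht0 : 0 ≤ t := le_trans htr0 ht1.le
  have hFt_mem : F t ∈ Set.Ioo r (r + (p/2) * r ^ (p-1)) := by
    constructor
    · have := hmF ht1; rwa [hFtr] at this
    · have := hmF ht2; rwa [hFnn r hr.le] at this
  have hSFt : S (F t) = r ^ p := by rw [hSF t ht0]; exact hgt
  refine ⟨F t, ⟨hFt_mem, hSFt⟩, ?_⟩
  intro l ⟨hlmem, hSl⟩
  have hl0 : (0:ℝ) ≤ l := le_of_lt (lt_trans hr hlmem.1)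
  have hFt0 : (0:ℝ) ≤ F t := le_of_lt (lt_trans hr hFt_mem.1)
  apply hSmono.injOn (Set.mem_Ici.mpr hl0) (Set.mem_Ici.mpr hFt0)
  rw [hSl, hSFt]
end

section
/- For p > 1 and λ with |λ| ≤ r, the minimizer over t ∈ ℝ of L_p(t,λ) = (t-λ)² + min{|t|^p, r^p} is unique and equals F_p^{-1}(λ), i.e. it coincides with the minimizer of (t-λ)² + |t|^p. -/
/-- Tangent-line inequality for `x ↦ x ^ p` on nonnegative reals. -/
lemma bern_aux (p : ℝ) (hp : 1 < p) (a b : ℝ) (ha : 0 ≤ a) (hb : 0 ≤ b) :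
    a ^ p + p * a ^ (p - 1) * (b - a) ≤ b ^ p := by
  rcases eq_or_lt_of_le ha with h0 | hpos
  · have h1 : (0:ℝ) ^ p = 0 := Real.zero_rpow (by positivity)
    have h2 : (0:ℝ) ^ (p - 1) = 0 := Real.zero_rpow (by nlinarith)
    rw [← h0, h1, h2]
    simpa using Real.rpow_nonneg hb p
  · have ha' : a ≠ 0 := hpos.ne'
    have hx1 : -1 ≤ b / a - 1 := by
      have : 0 ≤ b / a := div_nonneg hb hpos.le
      linarith
    have hB := one_add_mul_self_le_rpow_one_add hx1 hp.le
    have h1x : (1 : ℝ) + (b / a - 1) = b / a := by ring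
    rw [h1x, Real.div_rpow hb hpos.le] at hB
    have hap : (0:ℝ) < a ^ p := Real.rpow_pos_of_pos hpos p
    have key := mul_le_mul_of_nonneg_left hB hap.le
    have h2 : a ^ p * (b ^ p / a ^ p) = b ^ p := by field_simp
    rw [h2] at key
    have hsub : a ^ (p - 1) = a ^ p / a := by
      rw [Real.rpow_sub hpos, Real.rpow_one]
    have h3 : a ^ p * (1 + p * (b / a - 1)) = a ^ p + p * a ^ (p - 1) * (b - a) := by
      rw [hsub]; field_simp
    rw [h3] at key
    exact key

/-- Signed tangent-line inequality. -/
lemma tangent_aux (p : ℝ) (hp : 1 < p) (s t : ℝ) :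
    |s| ^ p + p * Real.sign s * |s| ^ (p - 1) * (t - s) ≤ |t| ^ p := by
  have hB := bern_aux p hp |s| |t| (abs_nonneg s) (abs_nonneg t)
  have hnn : 0 ≤ p * |s| ^ (p - 1) := by positivity
  have hkey : Real.sign s * (t - s) ≤ |t| - |s| := by
    rcases lt_trichotomy s 0 with h | h | h
    · rw [Real.sign_of_neg h]
      have : -t ≤ |t| := neg_le_abs t
      rw [abs_of_neg h]; linarith
    · subst h; simp [Real.sign_zero, abs_nonneg]
    · rw [Real.sign_of_pos h, abs_of_pos h]
      have : t ≤ |t| := le_abs_self t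
      linarith
  have : p * Real.sign s * |s| ^ (p - 1) * (t - s) ≤ p * |s| ^ (p - 1) * (|t| - |s|) := by
    have := mul_le_mul_of_nonneg_left hkey hnn
    nlinarith [this]
  linarith

lemma sign_abs_rpow_of_nonneg (p : ℝ) (hp : 1 < p) {s : ℝ} (hs : 0 ≤ s) :
    Real.sign s * |s| ^ (p - 1) = s ^ (p - 1) := by
  rcases eq_or_lt_of_le hs with h | h
  · rw [← h, Real.sign_zero, abs_zero]; simp [Real.zero_rpow (by nlinarith : p - 1 ≠ 0)]
  · rw [Real.sign_of_pos h, abs_of_pos h, one_mul]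

theorem stmt10 (p r : ℝ) (hp : 1 < p) (hr : 0 < r)
    (F : ℝ → ℝ) (hF : F = fun t => t + (p / 2) * Real.sign t * |t| ^ (p - 1))
    (lam : ℝ) (hlam : |lam| ≤ r)
    (L : ℝ → ℝ) (hL : L = fun t => (t - lam) ^ 2 + min (|t| ^ p) (r ^ p)) :
    (∀ t, L (Function.invFun F lam) ≤ L t) ∧
      (∀ t, L t = L (Function.invFun F lam) → t = Function.invFun F lam) ∧
      (∀ t, (Function.invFun F lam - lam) ^ 2 + |Function.invFun F lam| ^ p ≤
        (t - lam) ^ 2 + |t| ^ p) := by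
  have hp1 : (0:ℝ) ≤ p - 1 := by linarith
  -- F is odd
  have hFodd : ∀ t, F (-t) = -F t := by
    intro t
    simp only [hF, Real.sign_neg, abs_neg]
    ring
  -- F agrees with the "nonneg" formula
  have hFnn : ∀ t : ℝ, 0 ≤ t → F t = t + (p / 2) * t ^ (p - 1) := by
    intro t ht
    simp only [hF]
    rw [mul_assoc, sign_abs_rpow_of_nonneg p hp ht]
  -- F is strictly monotone
  have hFmono : StrictMono F := by
    have hmono : Monotone fun t : ℝ => (p / 2) * Real.sign t * |t| ^ (p - 1) := by
      intro a b hab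
      simp only
      have hhalf : (0:ℝ) < p / 2 := by linarith
      have key : Real.sign a * |a| ^ (p - 1) ≤ Real.sign b * |b| ^ (p - 1) := by
        rcases lt_trichotomy a 0 with ha | ha | ha
        · rcases lt_or_ge b 0 with hb | hb
          · rw [Real.sign_of_neg ha, Real.sign_of_neg hb, abs_of_neg ha, abs_of_neg hb]
            have : -b ≤ -a := by linarith
            have := Real.rpow_le_rpow (by linarith : (0:ℝ) ≤ -b) this hp1
            linarith
          · rw [Real.sign_of_neg ha, sign_abs_rpow_of_nonneg p hp hb]
            have h1 : 0 ≤ (-a) ^ (p - 1) := Real.rpow_nonneg (by linarith) _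
            have h2 : 0 ≤ b ^ (p - 1) := Real.rpow_nonneg hb _
            rw [abs_of_neg ha]; linarith
        · subst ha
          rw [sign_abs_rpow_of_nonneg p hp le_rfl, sign_abs_rpow_of_nonneg p hp hab]
          exact Real.rpow_le_rpow le_rfl hab hp1
        · rw [sign_abs_rpow_of_nonneg p hp ha.le, sign_abs_rpow_of_nonneg p hp (ha.le.trans hab)]
          exact Real.rpow_le_rpow ha.le hab hp1
      rw [mul_assoc, mul_assoc]
      exact mul_le_mul_of_nonneg_left key hhalf.le
    have : StrictMono fun t : ℝ => t + (p / 2) * Real.sign t * |t| ^ (p - 1) :=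
      strictMono_id.add_monotone hmono
    rwa [hF]
  -- existence of s with F s = lam
  have hexist : ∃ s, F s = lam := by
    have hcont : ContinuousOn (fun t : ℝ => t + (p / 2) * t ^ (p - 1)) (Set.Icc 0 |lam|) := by
      apply ContinuousOn.add continuousOn_id
      apply ContinuousOn.mul continuousOn_const
      intro x _
      exact (Real.continuousAt_rpow_const x (p - 1) (Or.inr hp1)).continuousWithinAt
    have h0 : (fun t : ℝ => t + (p / 2) * t ^ (p - 1)) 0 = 0 := by
      simp [Real.zero_rpow (by nlinarith : p - 1 ≠ 0)]
    have hub : |lam| ≤ (fun t : ℝ => t + (p / 2) * t ^ (p - 1)) |lam| := by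
      simp only
      have : 0 ≤ (p / 2) * |lam| ^ (p - 1) := by positivity
      linarith
    have := intermediate_value_Icc (abs_nonneg lam) hcont
    have hmem : |lam| ∈ Set.Icc ((fun t : ℝ => t + (p / 2) * t ^ (p - 1)) 0)
        ((fun t : ℝ => t + (p / 2) * t ^ (p - 1)) |lam|) := by
      rw [h0]
      exact ⟨abs_nonneg lam, hub⟩
    obtain ⟨c, hc1, hc2⟩ := this hmem
    have hFc : F c = |lam| := by rw [hFnn c hc1.1]; exact hc2
    rcases le_or_gt 0 lam with h | h
    · exact ⟨c, by rw [hFc, abs_of_nonneg h]⟩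
    · refine ⟨-c, ?_⟩
      rw [hFodd, hFc, abs_of_neg h, neg_neg]
  obtain ⟨s, hs⟩ := hexist
  set s₀ := Function.invFun F lam with hs₀
  have hFs₀ : F s₀ = lam := Function.invFun_eq ⟨s, hs⟩
  -- key gap inequality
  have keygap : ∀ t, (s₀ - lam) ^ 2 + |s₀| ^ p + (t - s₀) ^ 2 ≤ (t - lam) ^ 2 + |t| ^ p := by
    intro t
    have htan := tangent_aux p hp s₀ t
    have hlam' : lam = s₀ + (p / 2) * Real.sign s₀ * |s₀| ^ (p - 1) := by
      rw [← hFs₀, hF]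
    have hid : (t - lam) ^ 2 - (s₀ - lam) ^ 2 - (t - s₀) ^ 2 =
        -(p * Real.sign s₀ * |s₀| ^ (p - 1) * (t - s₀)) := by
      rw [hlam']; ring
    linarith [htan, hid.le, hid.ge]
  -- |s₀| ≤ lam in abs
  have hs₀lam : |s₀| ≤ |lam| := by
    rcases le_or_gt 0 s₀ with h | h
    · have := hFnn s₀ h
      rw [hFs₀] at this
      have hpw : 0 ≤ (p / 2) * s₀ ^ (p - 1) := by positivity
      have hlam0 : 0 ≤ lam := by rw [this]; positivity
      rw [abs_of_nonneg h, abs_of_nonneg hlam0, this]; linarith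
    · have hFneg := hFodd s₀
      have := hFnn (-s₀) (by linarith)
      rw [hFneg, hFs₀] at this
      have hw : 0 ≤ (p / 2) * (-s₀) ^ (p - 1) :=
        mul_nonneg (by linarith) (Real.rpow_nonneg (by linarith) _)
      have hlam0 : lam ≤ 0 := by linarith
      rw [abs_of_neg h, abs_of_nonpos hlam0]
      linarith
  have hs₀r : |s₀| ≤ r := hs₀lam.trans hlam
  have hmins₀ : min (|s₀| ^ p) (r ^ p) = |s₀| ^ p :=
    min_eq_left (Real.rpow_le_rpow (abs_nonneg _) hs₀r (by linarith))
  have hLs₀ : L s₀ = (s₀ - lam) ^ 2 + |s₀| ^ p := by rw [hL]; simp only; rw [hmins₀]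
  -- strict inequality for |t| > r
  have hstrict : ∀ t, r < |t| → L s₀ < L t := by
    intro t ht
    have hmin : min (|t| ^ p) (r ^ p) = r ^ p :=
      min_eq_right (Real.rpow_le_rpow hr.le ht.le (by linarith))
    have hLt : L t = (t - lam) ^ 2 + r ^ p := by rw [hL]; simp only; rw [hmin]
    rcases lt_or_ge t 0 with htn | htn
    · -- t < -r
      have htr : t < -r := by
        rw [abs_of_neg htn] at ht; linarith
      have hlam2 : -r ≤ lam := neg_le_of_abs_le hlam
      have hsq : (-r - lam) ^ 2 < (t - lam) ^ 2 := by
        nlinarith [mul_pos_of_neg_of_neg (show t + r < 0 by linarith)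
          (show t - r - 2 * lam < 0 by linarith)]
      have := keygap (-r)
      have habs : |(-r : ℝ)| = r := by rw [abs_neg, abs_of_pos hr]
      rw [habs] at this
      rw [hLs₀, hLt]
      linarith [this, hsq, sq_nonneg (-r - s₀)]
    · have htr : r < t := by rw [abs_of_nonneg htn] at ht; exact ht
      have hlam2 : lam ≤ r := le_of_abs_le hlam
      have hsq : (r - lam) ^ 2 < (t - lam) ^ 2 := by
        nlinarith [mul_pos (show 0 < t - r by linarith)
          (show 0 < t + r - 2 * lam by linarith)]
      have := keygap r
      have habs : |(r : ℝ)| = r := abs_of_pos hr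
      rw [habs] at this
      rw [hLs₀, hLt]
      linarith [this, hsq, sq_nonneg (r - s₀)]
  have hmin_le : ∀ t, L s₀ ≤ L t := by
    intro t
    rcases le_or_gt (|t|) r with ht | ht
    · have hmin : min (|t| ^ p) (r ^ p) = |t| ^ p :=
        min_eq_left (Real.rpow_le_rpow (abs_nonneg _) ht (by linarith))
      have hLt : L t = (t - lam) ^ 2 + |t| ^ p := by rw [hL]; simp only; rw [hmin]
      rw [hLs₀, hLt]
      linarith [keygap t, sq_nonneg (t - s₀)]
    · exact (hstrict t ht).le
  refine ⟨hmin_le, ?_, ?_⟩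
  · intro t hteq
    rcases le_or_gt (|t|) r with ht | ht
    · have hmin : min (|t| ^ p) (r ^ p) = |t| ^ p :=
        min_eq_left (Real.rpow_le_rpow (abs_nonneg _) ht (by linarith))
      have hLt : L t = (t - lam) ^ 2 + |t| ^ p := by rw [hL]; simp only; rw [hmin]
      have := keygap t
      rw [← hLt, ← hLs₀, hteq] at this
      have h1 : (t - s₀) ^ 2 ≤ 0 := by linarith
      have h2 := sq_nonneg (t - s₀)
      have h3 : (t - s₀) ^ 2 = 0 := le_antisymm h1 h2
      have := pow_eq_zero_iff (n := 2) (by norm_num) |>.mp h3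
      linarith
    · exact absurd hteq (hstrict t ht).ne'
  · intro t
    linarith [keygap t, sq_nonneg (t - s₀)]
end

section
/- For p = 2 and λ ≥ 0, the minimizer of L(t,λ) = (t-λ)² + min{t², r²} over t ∈ ℝ is H_{(2,r)}(λ) = λ/2 if |λ| < √2·r, and H_{(2,r)}(λ) = λ if |λ| > √2·r; at λ = √2·r both λ/2 and λ realize the minimum. -/
theorem stmt11 (r : ℝ) (hr : 0 < r) (lam : ℝ) (hlam : 0 ≤ lam)
    (L : ℝ → ℝ) (hL : L = fun t => (t - lam) ^ 2 + min (t ^ 2) (r ^ 2)) :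
    (lam < Real.sqrt 2 * r →
      (∀ t, L (lam / 2) ≤ L t) ∧ ∀ t, L t = L (lam / 2) → t = lam / 2) ∧
    (Real.sqrt 2 * r < lam →
      (∀ t, L lam ≤ L t) ∧ ∀ t, L t = L lam → t = lam) ∧
    (lam = Real.sqrt 2 * r → L (lam / 2) = L lam ∧ ∀ t, L (lam / 2) ≤ L t) := by
  subst hL
  have hs : Real.sqrt 2 ^ 2 = 2 := Real.sq_sqrt (by norm_num)
  have hs0 : (0:ℝ) ≤ Real.sqrt 2 := Real.sqrt_nonneg 2
  refine ⟨?_, ?_, ?_⟩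
  · intro h
    have hlt : lam ^ 2 < 2 * r ^ 2 := by nlinarith
    have hmin : min ((lam/2)^2) (r^2) = (lam/2)^2 := min_eq_left (by nlinarith)
    constructor
    · intro t
      simp only [hmin]
      rcases le_or_gt (t^2) (r^2) with ht | ht
      · rw [min_eq_left ht]; nlinarith [sq_nonneg (t - lam/2)]
      · rw [min_eq_right ht.le]; nlinarith [sq_nonneg (t - lam)]
    · intro t hEq
      simp only [hmin] at hEq
      rcases le_or_gt (t^2) (r^2) with ht | ht
      · rw [min_eq_left ht] at hEq
        have h0 : (t - lam/2)^2 = 0 := le_antisymm (by nlinarith) (sq_nonneg _)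
        have := pow_eq_zero_iff (n := 2) (by norm_num) |>.mp h0
        linarith
      · rw [min_eq_right ht.le] at hEq
        exfalso; nlinarith [sq_nonneg (t - lam)]
  · intro h
    have h1 : 0 < lam - Real.sqrt 2 * r := by linarith
    have h2 : 0 < lam + Real.sqrt 2 * r := by nlinarith
    have hlt : 2 * r ^ 2 < lam ^ 2 := by nlinarith [mul_pos h1 h2]
    have hmin : min (lam^2) (r^2) = r^2 := min_eq_right (by nlinarith)
    constructor
    · intro t
      simp only [hmin]
      rcases le_or_gt (t^2) (r^2) with ht | ht
      · rw [min_eq_left ht]; nlinarith [sq_nonneg (t - lam/2)]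
      · rw [min_eq_right ht.le]; nlinarith [sq_nonneg (t - lam)]
    · intro t hEq
      simp only [hmin] at hEq
      rcases le_or_gt (t^2) (r^2) with ht | ht
      · rw [min_eq_left ht] at hEq
        exfalso; nlinarith [sq_nonneg (t - lam/2)]
      · rw [min_eq_right ht.le] at hEq
        have h0 : (t - lam)^2 = 0 := le_antisymm (by nlinarith) (sq_nonneg _)
        have := pow_eq_zero_iff (n := 2) (by norm_num) |>.mp h0
        linarith
  · intro h
    have heq : lam ^ 2 = 2 * r ^ 2 := by rw [h]; ring_nf; nlinarith
    have hmin1 : min ((lam/2)^2) (r^2) = (lam/2)^2 := min_eq_left (by nlinarith)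
    have hmin2 : min (lam^2) (r^2) = r^2 := min_eq_right (by nlinarith)
    constructor
    · simp only [hmin1, hmin2]; nlinarith
    · intro t
      simp only [hmin1]
      rcases le_or_gt (t^2) (r^2) with ht | ht
      · rw [min_eq_left ht]; nlinarith [sq_nonneg (t - lam/2)]
      · rw [min_eq_right ht.le]; nlinarith [sq_nonneg (t - lam)]
end

section
/- For p = 1 and r > 1/4, the minimizer of L(t,λ) = (t-λ)² + min{|t|, r} over t ∈ ℝ, for λ ≥ 0, equals 0 if λ ≤ 1/2; equals λ - 1/2 if 1/2 < λ < r + 1/4; and equals λ if λ > r + 1/4. -/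
theorem stmt12 (r : ℝ) (hr : 1 / 4 < r) (lam : ℝ) (hlam : 0 ≤ lam)
    (L : ℝ → ℝ) (hL : L = fun t => (t - lam) ^ 2 + min |t| r) :
    (lam ≤ 1 / 2 → (∀ t, L 0 ≤ L t) ∧ ∀ t, L t = L 0 → t = 0) ∧
    (1 / 2 < lam → lam < r + 1 / 4 →
      (∀ t, L (lam - 1 / 2) ≤ L t) ∧ ∀ t, L t = L (lam - 1 / 2) → t = lam - 1 / 2) ∧
    (r + 1 / 4 < lam → (∀ t, L lam ≤ L t) ∧ ∀ t, L t = L lam → t = lam) := by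
  subst hL
  refine ⟨fun h1 => ?_, fun h2 h2' => ?_, fun h3 => ?_⟩
  · -- case lam ≤ 1/2, minimizer 0
    have key : ∀ t : ℝ, t ≠ 0 →
        ((0:ℝ) - lam) ^ 2 + min |(0:ℝ)| r < (t - lam) ^ 2 + min |t| r := by
      intro t ht
      rw [abs_zero, min_eq_left (by linarith : (0:ℝ) ≤ r)]
      rcases abs_cases t with ⟨ha, hb⟩ | ⟨ha, hb⟩ <;> rw [ha]
      · rcases le_total t r with hm | hm
        · have ht' : 0 < t := lt_of_le_of_ne hb (Ne.symm ht)
          rw [min_eq_left hm]; nlinarith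
        · rw [min_eq_right hm]; nlinarith [sq_nonneg (t - 1/2)]
      · rcases le_total (-t) r with hm | hm
        · rw [min_eq_left hm]; nlinarith
        · rw [min_eq_right hm]; nlinarith
    constructor
    · intro t
      rcases eq_or_ne t 0 with rfl | ht
      · exact le_refl _
      · exact le_of_lt (key t ht)
    · intro t ht
      by_contra h
      exact absurd ht (ne_of_gt (key t h))
  · -- case 1/2 < lam < r + 1/4, minimizer lam - 1/2
    have key : ∀ t : ℝ, t ≠ lam - 1/2 →
        ((lam - 1/2) - lam) ^ 2 + min |lam - 1/2| r < (t - lam) ^ 2 + min |t| r := by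
      intro t ht
      have h0 : (0:ℝ) ≤ lam - 1/2 := by linarith
      rw [abs_of_nonneg h0, min_eq_left (by linarith : lam - 1/2 ≤ r)]
      rcases abs_cases t with ⟨ha, hb⟩ | ⟨ha, hb⟩ <;> rw [ha]
      · rcases le_total t r with hm | hm
        · rw [min_eq_left hm]
          have hne : t - (lam - 1/2) ≠ 0 := sub_ne_zero.mpr ht
          have := pow_pos (abs_pos.mpr hne) 2 |>.trans_le (by rw [sq_abs])
          nlinarith
        · rw [min_eq_right hm]; nlinarith [sq_nonneg (t - lam)]
      · rcases le_total (-t) r with hm | hm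
        · rw [min_eq_left hm]; nlinarith [sq_nonneg (t - lam + 1/2)]
        · rw [min_eq_right hm]; nlinarith [sq_nonneg (t - lam)]
    constructor
    · intro t
      rcases eq_or_ne t (lam - 1/2) with rfl | ht
      · exact le_refl _
      · exact le_of_lt (key t ht)
    · intro t ht
      by_contra h
      exact absurd ht (ne_of_gt (key t h))
  · -- case r + 1/4 < lam, minimizer lam
    have key : ∀ t : ℝ, t ≠ lam →
        (lam - lam) ^ 2 + min |lam| r < (t - lam) ^ 2 + min |t| r := by
      intro t ht
      have h0 : (0:ℝ) ≤ lam := hlam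
      rw [abs_of_nonneg h0, min_eq_right (by linarith : r ≤ lam)]
      rcases abs_cases t with ⟨ha, hb⟩ | ⟨ha, hb⟩ <;> rw [ha]
      · rcases le_total t r with hm | hm
        · rw [min_eq_left hm]; nlinarith [sq_nonneg (t - lam + 1/2)]
        · rw [min_eq_right hm]
          have hne : t - lam ≠ 0 := sub_ne_zero.mpr ht
          have := pow_pos (abs_pos.mpr hne) 2 |>.trans_le (by rw [sq_abs])
          nlinarith
      · rcases le_total (-t) r with hm | hm
        · rw [min_eq_left hm]; nlinarith [sq_nonneg (r - 1/4)]
        · rw [min_eq_right hm]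
          have hne : t - lam ≠ 0 := sub_ne_zero.mpr ht
          have := pow_pos (abs_pos.mpr hne) 2 |>.trans_le (by rw [sq_abs])
          nlinarith
    constructor
    · intro t
      rcases eq_or_ne t lam with rfl | ht
      · exact le_refl _
      · exact le_of_lt (key t ht)
    · intro t ht
      by_contra h
      exact absurd ht (ne_of_gt (key t h))
end

section
/- For p = 1 and 0 < r ≤ 1/4, the minimizer of L(t,λ) = (t-λ)² + min{|t|, r} over t ∈ ℝ, for λ ≥ 0, equals 0 if λ < √r and equals λ if λ > √r. -/
theorem stmt13 (r : ℝ) (hr0 : 0 < r) (hr : r ≤ 1 / 4) (lam : ℝ) (hlam : 0 ≤ lam)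
    (L : ℝ → ℝ) (hL : L = fun t => (t - lam) ^ 2 + min |t| r) :
    (lam < Real.sqrt r → (∀ t, L 0 ≤ L t) ∧ ∀ t, L t = L 0 → t = 0) ∧
    (Real.sqrt r < lam → (∀ t, L lam ≤ L t) ∧ ∀ t, L t = L lam → t = lam) := by
  subst hL
  set s := Real.sqrt r with hs_def
  have hs2 : s ^ 2 = r := Real.sq_sqrt hr0.le
  have hs0 : 0 < s := Real.sqrt_pos.mpr hr0
  have hsle : s ≤ 1 / 2 := by nlinarith
  have hrs : r ≤ s := by nlinarith
  have hL0 : ((fun t => (t - lam) ^ 2 + min |t| r) 0) = lam ^ 2 := by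
    simp [min_eq_left hr0.le]
  -- key strict inequality for case 1
  have key1 : lam < s → ∀ t, t ≠ 0 →
      lam ^ 2 < (t - lam) ^ 2 + min |t| r := by
    intro h t ht
    have hlam2 : lam ^ 2 < r := by nlinarith
    have hlamh : lam < 1 / 2 := lt_of_lt_of_le h hsle
    rcases le_total r |t| with hrt | hrt
    · rw [min_eq_right hrt]
      nlinarith [sq_nonneg (t - lam)]
    · rw [min_eq_left hrt]
      rcases lt_trichotomy t 0 with htn | htn | htn
      · rw [abs_of_neg htn]; nlinarith
      · exact absurd htn ht
      · rw [abs_of_pos htn]; nlinarith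
  -- key strict inequality for case 2
  have key2 : s < lam → ∀ t, t ≠ lam →
      r < (t - lam) ^ 2 + min |t| r := by
    intro h t ht
    have hlam2 : r < lam ^ 2 := by nlinarith
    rcases le_total r |t| with hrt | hrt
    · rw [min_eq_right hrt]
      have hne : t - lam ≠ 0 := sub_ne_zero.mpr ht
      have : (t - lam) ^ 2 > 0 := by positivity
      linarith
    · rw [min_eq_left hrt]
      rcases le_or_gt 0 t with htn | htn
      · rw [abs_of_nonneg htn]
        have habs : t ≤ r := (abs_of_nonneg htn) ▸ hrt
        have hts : t ≤ s := habs.trans hrs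
        nlinarith [mul_nonneg htn (by nlinarith : (0:ℝ) ≤ t + 1 - 2 * s),
          mul_pos (sub_pos.mpr h) (by nlinarith : (0:ℝ) < lam + s - 2 * t)]
      · rw [abs_of_neg htn]; nlinarith
  constructor
  · intro h
    constructor
    · intro t
      rcases eq_or_ne t 0 with rfl | ht
      · exact le_refl _
      · rw [hL0]; exact (key1 h t ht).le
    · intro t hteq
      by_contra ht
      have := key1 h t ht
      rw [hL0] at hteq
      simp only at hteq
      linarith
  · intro h
    have hrlam : r < lam := lt_of_le_of_lt hrs h
    have hLlam : ((fun t => (t - lam) ^ 2 + min |t| r) lam) = r := by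
      simp [abs_of_nonneg hlam, min_eq_right hrlam.le]
    constructor
    · intro t
      rcases eq_or_ne t lam with rfl | ht
      · exact le_refl _
      · rw [hLlam]; exact (key2 h t ht).le
    · intro t hteq
      by_contra ht
      have := key2 h t ht
      rw [hLlam] at hteq
      simp only at hteq
      linarith
end

section
/- For p > 1, the thresholding function H_{(p,r)} has a jump discontinuity at λ'(r,p) of strictly positive size: λ'(r,p) > r while H_{(p,r)}(λ') = F_p^{-1}(λ') < r; hence δ(r,p) = λ' - F_p^{-1}(λ') > 0. -/
theorem stmt14 (p r : ℝ) (hp : 1 < p) (hr : 0 < r)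
    (F : ℝ → ℝ) (hF : F = fun t => t + (p / 2) * Real.sign t * |t| ^ (p - 1))
    (S : ℝ → ℝ)
    (hS : S = fun l => (Function.invFun F l - l) ^ 2 + |Function.invFun F l| ^ p)
    (lam : ℝ) (hlam : 0 ≤ lam) (heq : S lam = r ^ p) :
    r < lam ∧ Function.invFun F lam < r ∧ 0 < lam - Function.invFun F lam := by
  have hp0 : (0:ℝ) < p := lt_trans one_pos hp
  have hp1 : (0:ℝ) < p - 1 := sub_pos.mpr hp
  have hrp : 0 < r ^ p := Real.rpow_pos_of_pos hr p
  -- existence of a preimage of lam under F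
  set g : ℝ → ℝ := fun t => t + (p / 2) * t ^ (p - 1) with hg
  have hgF : ∀ t : ℝ, 0 ≤ t → F t = g t := by
    intro t ht
    rcases ht.eq_or_lt with h | h
    · simp [hF, hg, ← h, Real.zero_rpow (ne_of_gt hp1)]
    · simp [hF, hg, Real.sign_of_pos h, abs_of_pos h]
  have hgc : Continuous g := by
    apply continuous_id.add
    apply continuous_const.mul
    rw [continuous_iff_continuousAt]
    intro x
    exact Real.continuousAt_rpow_const x (p - 1) (Or.inr hp1.le)
  have hg0 : g 0 = 0 := by simp [hg, Real.zero_rpow (ne_of_gt hp1)]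
  have hgM : lam ≤ g (lam + 1) := by
    have h1 : (0:ℝ) ≤ (p / 2) * (lam + 1) ^ (p - 1) :=
      mul_nonneg (by linarith) (Real.rpow_nonneg (by linarith) _)
    simp only [hg]
    linarith
  obtain ⟨t0, _, ht0⟩ : ∃ t ∈ Set.Icc (0:ℝ) (lam + 1), g t = lam := by
    apply intermediate_value_Icc (by linarith) hgc.continuousOn
    rw [hg0]
    exact ⟨hlam, hgM⟩
  have ht0' : F t0 = lam := by
    rw [hgF t0 (by nlinarith [Set.mem_Icc.mp ‹t0 ∈ Set.Icc (0:ℝ) (lam+1)›] : (0:ℝ) ≤ t0)]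
    · exact ht0
  have hFeq : F (Function.invFun F lam) = lam := Function.invFun_eq ⟨t0, ht0'⟩
  set u := Function.invFun F lam with hu
  have hkey : u + (p / 2) * Real.sign u * |u| ^ (p - 1) = lam := by
    rw [hF] at hFeq; exact hFeq
  -- u is positive
  have hupos : 0 < u := by
    rcases lt_trichotomy u 0 with h | h | h
    · exfalso
      rw [Real.sign_of_neg h] at hkey
      have habs : (0:ℝ) ≤ (p / 2) * |u| ^ (p - 1) :=
        mul_nonneg (by linarith) (Real.rpow_nonneg (abs_nonneg u) _)
      nlinarith
    · exfalso
      rw [h, Real.sign_zero] at hkey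
      simp only [mul_zero, zero_mul, zero_add, add_zero] at hkey
      rw [hS] at heq
      simp only [← hu] at heq
      rw [h, ← hkey, abs_zero, Real.zero_rpow (ne_of_gt hp0)] at heq
      simp at heq
      linarith
    · exact h
  rw [Real.sign_of_pos hupos, abs_of_pos hupos, mul_one] at hkey
  set c : ℝ := (p / 2) * u ^ (p - 1) with hc
  have hc0 : 0 < c := mul_pos (by linarith) (Real.rpow_pos_of_pos hupos _)
  have hlamuc : lam = u + c := hkey.symm
  have heq2 : c ^ 2 + u ^ p = r ^ p := by
    rw [hS] at heq
    simp only [← hu] at heq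
    rw [abs_of_pos hupos] at heq
    have : (u - lam) ^ 2 = c ^ 2 := by rw [hlamuc]; ring
    linarith
  -- u < r
  have hur : u < r := by
    by_contra h
    push_neg at h
    have := Real.rpow_le_rpow hr.le h hp0.le
    nlinarith [sq_nonneg c, hc0]
  -- r < lam : via Bernoulli
  have hbern : u ^ p + p * u ^ (p - 1) * c ≤ lam ^ p := by
    have hs : (0:ℝ) ≤ c / u := le_of_lt (div_pos hc0 hupos)
    have hb := one_add_mul_self_le_rpow_one_add (by linarith : (-1:ℝ) ≤ c / u) hp.le
    have h1u : (0:ℝ) < 1 + c / u := by linarith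
    have hmul := mul_le_mul_of_nonneg_left hb (Real.rpow_nonneg hupos.le p)
    rw [← Real.mul_rpow hupos.le h1u.le] at hmul
    have hexpand : u * (1 + c / u) = lam := by
      rw [hlamuc]; field_simp
    rw [hexpand] at hmul
    have hpow : u ^ (p - 1) = u ^ p / u := by
      rw [Real.rpow_sub hupos, Real.rpow_one]
    have key : u ^ p + p * u ^ (p - 1) * c = u ^ p * (1 + p * (c / u)) := by
      rw [hpow]; field_simp
    rw [key]; exact hmul
  have hpuc : p * u ^ (p - 1) * c = 2 * c ^ 2 := by
    rw [hc]; ring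
  have hrlam : r < lam := by
    by_contra h
    push_neg at h
    have := Real.rpow_le_rpow hlam h hp0.le
    nlinarith [sq_nonneg c]
  exact ⟨hrlam, hur, by rw [hlamuc]; linarith⟩
end
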